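/- Let p ≥ 1 be an integer. For every pair (l,m) with 1 ≤ m ≤ l ≤ p, the gradient of H^{(l,m)} at points of the plane z = 0 is ∇H^{(l,m)}(x,y,0) = (0, 0, F^{(l,m)}(x,y)), where F^{(l,m)}(x,y) = ∂H^{(l,m)}/∂z(x,y,0). Moreover, the linear span (over ℝ) of the two-variable polynomials {F^{(l,m)} : 1 ≤ m ≤ l ≤ p} equals the linear span of the monomials {xⁱyʲ : 0 ≤ i+j ≤ p−1}; in particular, the polynomials F^{(l,m)} (1 ≤ m ≤ l ≤ p) form a complete and linearly independent basis for polynomials of degree at most p−1 in x and y. -/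
import Mathlib


/-- Points of ℝ³, represented as functions `Fin 3 → ℝ`. -/
abbrev R3 := Fin 3 → ℝ

/-- Partial derivative of a scalar function in the `i`-th coordinate direction. -/
noncomputable def pd (i : Fin 3) (f : R3 → ℝ) (x : R3) : ℝ :=
  fderiv ℝ f x (Pi.single i 1)

/-- Gradient of a scalar function on ℝ³. -/
noncomputable def grad3 (f : R3 → ℝ) (x : R3) : R3 := fun i => pd i f x

/-- The coefficient `γ_{lk}^{(m)} = (−1)^k 2^{−l} C(l,k) C(2l−2k,l) (l−2k)!/(l−2k−m)!`. -/
noncomputable def gam (l k m : ℕ) : ℝ :=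
  (-1 : ℝ) ^ k * (2 : ℝ)⁻¹ ^ l * (l.choose k : ℝ) * ((2 * l - 2 * k).choose l : ℝ) *
    ((l - 2 * k).factorial : ℝ) / ((l - 2 * k - m).factorial : ℝ)

/-- `B_m(y,z)`, the imaginary part of `(y+iz)^m`. -/
noncomputable def Bm (m : ℕ) (y z : ℝ) : ℝ := (((y : ℂ) + (z : ℂ) * Complex.I) ^ m).im

/-- `Π_l^m(x,y,z) = Σ_{k=0}^{⌊(l−m)/2⌋} γ_{lk}^{(m)} (x²+y²+z²)^k x^{l−2k−m}`. -/
noncomputable def Pim (l m : ℕ) (x y z : ℝ) : ℝ :=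
  ∑ k ∈ Finset.range ((l - m) / 2 + 1),
    gam l k m * (x ^ 2 + y ^ 2 + z ^ 2) ^ k * x ^ (l - 2 * k - m)

/-- The harmonic polynomial `H^{(l,m)}(x,y,z) = √(2(l−m)!/(l+m)!) Π_l^m(x,y,z) B_m(y,z)`. -/
noncomputable def Hc (l m : ℕ) (x y z : ℝ) : ℝ :=
  Real.sqrt (2 * ((l - m).factorial : ℝ) / ((l + m).factorial : ℝ)) * Pim l m x y z * Bm m y z

/-- `H^{(l,m)}` as a function on ℝ³. -/
noncomputable def Hfun (l m : ℕ) : R3 → ℝ := fun v => Hc l m (v 0) (v 1) (v 2)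

/-- `F^{(l,m)}(x,y) = ∂H^{(l,m)}/∂z (x,y,0)`. -/
noncomputable def Fz (l m : ℕ) (x y : ℝ) : ℝ := pd 2 (Hfun l m) ![x, y, 0]


section Aux
open Finset

section KeyPoly
open Polynomial

lemma expandA (l : ℕ) : ((X^2 - 1 : ℝ[X]))^l
    = ∑ k ∈ range (l+1), ((-1:ℝ)^k * (l.choose k)) • X^(2*(l-k)) := by
  have h : ((X^2 - 1 : ℝ[X]))^l = ((-1) + X^2)^l := by ring
  rw [h, add_pow]
  refine Finset.sum_congr rfl fun k hk => ?_
  simp only [Finset.mem_range] at hk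
  rw [smul_eq_C_mul]
  simp only [C_mul, C_pow, map_neg, map_one, C_eq_natCast, ← pow_mul]
  ring

lemma expandB (l : ℕ) : ((X^2 - 1 : ℝ[X]))^l
    = ∑ j ∈ range (l+1), ((l.choose j : ℝ) * 2^(l-j)) • (X - C 1)^(l+j) := by
  have h : ((X^2 - 1 : ℝ[X]))^l = ((X - C 1) * ((X - C 1) + C 2))^l := by
    simp only [map_one, map_ofNat]; ring
  rw [h, mul_pow, add_pow, Finset.mul_sum]
  refine Finset.sum_congr rfl fun j hj => ?_
  rw [smul_eq_C_mul]
  simp only [C_mul, C_pow, map_ofNat, C_eq_natCast, pow_add]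
  ring

lemma keyA (l m : ℕ) : Polynomial.eval 1 (Polynomial.derivative^[l+m] ((X^2 - 1 : ℝ[X])^l))
    = ∑ k ∈ range (l+1), (-1:ℝ)^k * (l.choose k) * ((2*(l-k)).descFactorial (l+m)) := by
  rw [expandA, iterate_derivative_sum]
  rw [eval_finset_sum]
  refine Finset.sum_congr rfl fun k hk => ?_
  rw [iterate_derivative_smul, iterate_derivative_X_pow_eq_smul]
  simp [mul_assoc]

lemma keyB (l m : ℕ) (h : m ≤ l) :
    Polynomial.eval 1 (Polynomial.derivative^[l+m] ((X^2 - 1 : ℝ[X])^l))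
    = (l.choose m : ℝ) * 2^(l-m) * ((l+m).factorial : ℝ) := by
  rw [expandB, iterate_derivative_sum, eval_finset_sum]
  rw [Finset.sum_eq_single m]
  · rw [iterate_derivative_smul, iterate_derivative_X_sub_pow]
    simp [Nat.descFactorial_self, mul_assoc]
  · intro j hj hjm
    rw [iterate_derivative_smul, iterate_derivative_X_sub_pow]
    rcases lt_or_gt_of_ne hjm with hlt | hgt
    · have : (l+j).descFactorial (l+m) = 0 :=
        Nat.descFactorial_eq_zero_iff_lt.2 (by omega)
      simp [this]
    · have h2 : l + j - (l + m) = j - m := by omega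
      have h3 : 0 < j - m := by omega
      simp [h2, zero_pow (by omega : j - m ≠ 0)]
  · intro hm; exact absurd (Finset.mem_range.2 (by omega)) hm

end KeyPoly


lemma gam_eq (l k m : ℕ) (hm : 1 ≤ m) (hml : m ≤ l) (hk : k ≤ (l-m)/2) :
    gam l k m = (-1:ℝ)^k * (2:ℝ)⁻¹^l * (l.choose k : ℝ)
      * ((2*(l-k)).descFactorial (l+m) : ℝ) / (l.factorial : ℝ) := by
  have h2k : 2*k ≤ l - m := by
    have := Nat.div_mul_le_self (l-m) 2
    omega
  have hnat : (2*l-2*k).choose l * l.factorial * (l-2*k).factorial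
      = (l-2*k-m).factorial * ((2*(l-k)).descFactorial (l+m)) :=
    calc (2*l-2*k).choose l * l.factorial * (l-2*k).factorial
        = (2*(l-k)).choose l * l.factorial * (2*(l-k) - l).factorial := by
          rw [show (2*(l-k) - l) = l - 2*k from by omega,
              show 2*l-2*k = 2*(l-k) from by omega]
      _ = (2*(l-k)).factorial := Nat.choose_mul_factorial_mul_factorial (by omega)
      _ = ((2*(l-k)) - (l+m)).factorial * ((2*(l-k)).descFactorial (l+m)) :=
          (Nat.factorial_mul_descFactorial (by omega)).symm
      _ = (l-2*k-m).factorial * ((2*(l-k)).descFactorial (l+m)) := by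
          rw [show 2*(l-k)-(l+m) = l-2*k-m from by omega]
  have hnat' : ((2*l-2*k).choose l : ℝ) * (l.factorial : ℝ) * ((l-2*k).factorial : ℝ)
      = ((l-2*k-m).factorial : ℝ) * ((2*(l-k)).descFactorial (l+m) : ℝ) := by
    exact_mod_cast congrArg (Nat.cast : ℕ → ℝ) hnat
  have hf1 : ((l-2*k-m).factorial : ℝ) ≠ 0 := Nat.cast_ne_zero.2 (Nat.factorial_ne_zero _)
  have hf2 : (l.factorial : ℝ) ≠ 0 := Nat.cast_ne_zero.2 (Nat.factorial_ne_zero _)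
  have key : ((2*l-2*k).choose l : ℝ) * ((l-2*k).factorial : ℝ) / ((l-2*k-m).factorial : ℝ)
      = ((2*(l-k)).descFactorial (l+m) : ℝ) / (l.factorial : ℝ) := by
    rw [div_eq_div_iff hf1 hf2]; linarith [hnat']
  have e1 : gam l k m = ((-1:ℝ)^k * (2:ℝ)⁻¹^l * (l.choose k : ℝ))
      * (((2*l-2*k).choose l : ℝ) * ((l-2*k).factorial : ℝ) / ((l-2*k-m).factorial : ℝ)) := by
    unfold gam; ring
  rw [e1, key]; ring

open Polynomial in
lemma gamsum (l m : ℕ) (hm : 1 ≤ m) (hml : m ≤ l) :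
    ∑ k ∈ range ((l-m)/2+1), gam l k m
    = (l.choose m : ℝ) * 2^(l-m) * ((l+m).factorial : ℝ) / (2^l * l.factorial) := by
  have hstep : ∀ k ∈ range ((l-m)/2+1), gam l k m
      = (2:ℝ)⁻¹^l / l.factorial * ((-1:ℝ)^k * (l.choose k : ℝ)
          * ((2*(l-k)).descFactorial (l+m) : ℝ)) := by
    intro k hk
    rw [gam_eq l k m hm hml (by simpa using Nat.lt_succ_iff.1 (Finset.mem_range.1 hk))]
    ring
  rw [Finset.sum_congr rfl hstep, ← Finset.mul_sum]
  have hsub : Finset.range ((l-m)/2+1) ⊆ Finset.range (l+1) := by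
    apply Finset.range_subset_range.2
    have := Nat.div_le_self (l-m) 2
    omega
  have hext : ∑ k ∈ range ((l-m)/2+1),
        ((-1:ℝ)^k * (l.choose k : ℝ) * ((2*(l-k)).descFactorial (l+m) : ℝ))
      = ∑ k ∈ range (l+1),
        ((-1:ℝ)^k * (l.choose k : ℝ) * ((2*(l-k)).descFactorial (l+m) : ℝ)) := by
    apply Finset.sum_subset hsub
    intro k hk hnk
    simp only [Finset.mem_range] at hk hnk
    have h1 : (l-m)/2 + 1 ≤ k := by omega
    have : (2*(l-k)).descFactorial (l+m) = 0 := by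
      apply Nat.descFactorial_eq_zero_iff_lt.2
      omega
    simp [this]
  rw [hext, ← keyA, keyB l m hml]
  rw [inv_pow, div_mul_eq_mul_div, inv_mul_eq_div, div_div]


@[fun_prop]
lemma diff_im : Differentiable ℝ Complex.im := Complex.imCLM.differentiable
@[fun_prop]
lemma diff_ofReal : Differentiable ℝ Complex.ofReal := Complex.ofRealCLM.differentiable

lemma diffH (l m : ℕ) : Differentiable ℝ (Hfun l m) := by
  unfold Hfun Hc Pim Bm
  fun_prop

lemma pd_eq (f : R3 → ℝ) (hf : Differentiable ℝ f) (x : R3) (i : Fin 3) :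
    pd i f x = deriv (fun t : ℝ => f (x + t • (Pi.single i 1 : R3))) 0 := by
  rw [pd, ← (hf x).lineDeriv_eq_fderiv]
  rfl

example (x y t : ℝ) : (![x,y,0] + t • (Pi.single (0: Fin 3) 1 : R3)) = ![x+t, y, 0] := by
  funext j; fin_cases j <;> simp [Pi.single_apply]
example (x y t : ℝ) : (![x,y,0] + t • (Pi.single (1: Fin 3) 1 : R3)) = ![x, y+t, 0] := by
  funext j; fin_cases j <;> simp [Pi.single_apply]
example (x y t : ℝ) : (![x,y,0] + t • (Pi.single (2: Fin 3) 1 : R3)) = ![x, y, t] := by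
  funext j; fin_cases j <;> simp [Pi.single_apply]
example (l m : ℕ) (x y z : ℝ) : Hfun l m ![x,y,z] = Hc l m x y z := by simp [Hfun]

lemma Bm_z0 (m : ℕ) (y : ℝ) : Bm m y 0 = 0 := by
  simp [Bm, ← Complex.ofReal_pow]

lemma Hc_z0 (l m : ℕ) (x y : ℝ) : Hc l m x y 0 = 0 := by simp [Hc, Bm_z0]

lemma hasDerivBm (m : ℕ) (y : ℝ) :
    HasDerivAt (fun z : ℝ => Bm m y z) (m * y^(m-1)) 0 := by
  have ha : HasDerivAt (fun z : ℝ => ((z : ℝ) : ℂ)) 1 0 := (hasDerivAt_id (0:ℝ)).ofReal_comp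
  have hb : HasDerivAt (fun z : ℝ => ((z:ℂ) * Complex.I)) (1 * Complex.I) 0 :=
    ha.mul_const Complex.I
  have h1 : HasDerivAt (fun z : ℝ => ((y:ℂ) + (z:ℂ)*Complex.I)) (1 * Complex.I) 0 :=
    hb.const_add (y:ℂ)
  have hg : HasDerivAt (fun w : ℂ => w ^ m)
      ((m:ℂ) * ((y:ℂ) + ((0:ℝ):ℂ)*Complex.I) ^ (m-1)) ((y:ℂ) + ((0:ℝ):ℂ)*Complex.I) :=
    hasDerivAt_pow m _
  have h2 : HasDerivAt (fun z : ℝ => ((y:ℂ) + (z:ℂ)*Complex.I) ^ m)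
      ((1 * Complex.I) • ((m:ℂ) * ((y:ℂ) + ((0:ℝ):ℂ)*Complex.I) ^ (m-1))) 0 := by
    exact HasDerivAt.scomp (0:ℝ) hg h1
  have h3 := Complex.imCLM.hasFDerivAt.comp_hasDerivAt 0 h2
  have h4 : Complex.imCLM ((1 * Complex.I) • ((m:ℂ) * ((y:ℂ) + ((0:ℝ):ℂ)*Complex.I) ^ (m-1)))
      = (m:ℝ) * y^(m-1) := by
    simp [← Complex.ofReal_pow, ← Complex.ofReal_natCast, ← Complex.ofReal_mul, smul_eq_mul]
  rw [h4] at h3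
  exact h3

lemma diffPim (l m : ℕ) (x y : ℝ) : Differentiable ℝ (fun z : ℝ => Pim l m x y z) := by
  unfold Pim; fun_prop

lemma Fz_eq (l m : ℕ) (x y : ℝ) :
    Fz l m x y = Real.sqrt (2 * ((l - m).factorial : ℝ) / ((l + m).factorial : ℝ))
      * Pim l m x y 0 * (m * y^(m-1)) := by
  rw [Fz, pd_eq _ (diffH l m)]
  have hco : (fun t : ℝ => Hfun l m (![x,y,0] + t • (Pi.single (2: Fin 3) 1 : R3)))
      = fun t => Hc l m x y t := by
    funext t
    have : (![x,y,0] + t • (Pi.single (2: Fin 3) 1 : R3)) = ![x, y, t] := by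
      funext j; fin_cases j <;> simp [Pi.single_apply]
    rw [this]; simp [Hfun]
  rw [hco]
  set c := Real.sqrt (2 * ((l - m).factorial : ℝ) / ((l + m).factorial : ℝ)) with hc
  have hP : HasDerivAt (fun z : ℝ => Pim l m x y z) (deriv (fun z : ℝ => Pim l m x y z) 0) 0 :=
    ((diffPim l m x y) 0).hasDerivAt
  have hB := hasDerivBm m y
  have key : HasDerivAt (fun t : ℝ => Hc l m x y t)
      (c * deriv (fun z : ℝ => Pim l m x y z) 0 * Bm m y 0
        + (c * Pim l m x y 0) * ((m:ℝ) * y^(m-1))) 0 := by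
    unfold Hc
    exact (hP.const_mul c).mul hB
  rw [key.deriv, Bm_z0]
  ring

lemma grad_eq (l m : ℕ) (x y : ℝ) :
    grad3 (Hfun l m) ![x, y, 0] = ![0, 0, Fz l m x y] := by
  funext i
  fin_cases i
  · show pd 0 (Hfun l m) ![x,y,0] = 0
    rw [pd_eq _ (diffH l m)]
    have hco : (fun t : ℝ => Hfun l m (![x,y,0] + t • (Pi.single (0: Fin 3) 1 : R3)))
        = fun _ => (0:ℝ) := by
      funext t
      have : (![x,y,0] + t • (Pi.single (0: Fin 3) 1 : R3)) = ![x+t, y, 0] := by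
        funext j; fin_cases j <;> simp [Pi.single_apply]
      rw [this]
      simp [Hfun, Hc_z0]
    rw [hco, deriv_const]
  · show pd 1 (Hfun l m) ![x,y,0] = 0
    rw [pd_eq _ (diffH l m)]
    have hco : (fun t : ℝ => Hfun l m (![x,y,0] + t • (Pi.single (1: Fin 3) 1 : R3)))
        = fun _ => (0:ℝ) := by
      funext t
      have : (![x,y,0] + t • (Pi.single (1: Fin 3) 1 : R3)) = ![x, y+t, 0] := by
        funext j; fin_cases j <;> simp [Pi.single_apply]
      rw [this]
      simp [Hfun, Hc_z0]
    rw [hco, deriv_const]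
  · rfl

end Aux

section StepD
open Finset Submodule

noncomputable def csq (l m : ℕ) : ℝ :=
  Real.sqrt (2 * ((l - m).factorial : ℝ) / ((l + m).factorial : ℝ))

lemma csq_pos (l m : ℕ) : 0 < csq l m := by
  apply Real.sqrt_pos.2
  positivity

noncomputable def Mon (i j : ℕ) : ℝ × ℝ → ℝ := fun q => q.1 ^ i * q.2 ^ j

lemma Pim_z0 (l m : ℕ) (x y : ℝ) : Pim l m x y 0
    = ∑ k ∈ range ((l - m) / 2 + 1),
        gam l k m * (x ^ 2 + y ^ 2) ^ k * x ^ (l - 2 * k - m) := by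
  unfold Pim
  norm_num

lemma Fz_expand (l m : ℕ) :
    (fun q : ℝ × ℝ => Fz l m q.1 q.2)
    = ∑ k ∈ range ((l - m) / 2 + 1), ∑ a ∈ range (k + 1),
        (csq l m * m * gam l k m * (k.choose a : ℝ))
          • Mon (2 * a + (l - 2 * k - m)) (2 * (k - a) + (m - 1)) := by
  funext q
  obtain ⟨x, y⟩ := q
  show Fz l m x y = _
  rw [Fz_eq, Pim_z0]
  simp only [Finset.sum_apply, Pi.smul_apply, Mon, smul_eq_mul]
  rw [show Real.sqrt (2 * ((l - m).factorial : ℝ) / ((l + m).factorial : ℝ)) = csq l m from rfl]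
  rw [Finset.mul_sum, Finset.sum_mul]
  refine Finset.sum_congr rfl fun k hk => ?_
  rw [add_pow]
  simp only [Finset.mul_sum, Finset.sum_mul]
  refine Finset.sum_congr rfl fun a ha => ?_
  simp only [← pow_mul]
  rw [pow_add, pow_add]
  ring

end StepD


section StepD2
open Finset Submodule

def Fset (p : ℕ) : Set (ℝ × ℝ → ℝ) :=
  {f | ∃ l m : ℕ, 1 ≤ m ∧ m ≤ l ∧ l ≤ p ∧ f = fun q => Fz l m q.1 q.2}

def Mset (p : ℕ) : Set (ℝ × ℝ → ℝ) :=
  {f | ∃ i j : ℕ, i + j ≤ p - 1 ∧ f = fun q => q.1 ^ i * q.2 ^ j}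

lemma Mon_mem_Mset (p i j : ℕ) (h : i + j ≤ p - 1) : Mon i j ∈ Mset p :=
  ⟨i, j, h, rfl⟩

lemma two_k_le (l m k : ℕ) (hk : k ∈ range ((l - m) / 2 + 1)) : 2 * k ≤ l - m := by
  simp only [Finset.mem_range] at hk
  have h1 : k ≤ (l - m) / 2 := by omega
  have := Nat.div_mul_le_self (l - m) 2
  omega

lemma F_mem_span_M (p l m : ℕ) (hm : 1 ≤ m) (hml : m ≤ l) (hlp : l ≤ p) :
    (fun q : ℝ × ℝ => Fz l m q.1 q.2) ∈ span ℝ (Mset p) := by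
  rw [Fz_expand]
  refine Submodule.sum_mem _ fun k hk => Submodule.sum_mem _ fun a ha => ?_
  refine Submodule.smul_mem _ _ (Submodule.subset_span ?_)
  refine Mon_mem_Mset p _ _ ?_
  have h2k := two_k_le l m k hk
  simp only [Finset.mem_range] at ha
  omega

lemma M_mem_span_F (p : ℕ) (hp : 1 ≤ p) :
    ∀ i j : ℕ, i + j ≤ p - 1 → Mon i j ∈ span ℝ (Fset p) := by
  intro i
  induction i using Nat.strong_induction_on with
  | _ i IH =>
  intro j hij
  set l := i + j + 1 with hl
  set m := j + 1 with hm'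
  have hm : 1 ≤ m := by omega
  have hml : m ≤ l := by omega
  have hlp : l ≤ p := by omega
  set w : ℕ → ℕ → ℝ := fun k a => csq l m * m * gam l k m * (k.choose a : ℝ) with hw
  set K := (l - m) / 2 + 1 with hK
  have hsplit : (fun q : ℝ × ℝ => Fz l m q.1 q.2)
      = (∑ k ∈ range K, ∑ a ∈ range k,
          w k a • Mon (2 * a + (l - 2 * k - m)) (2 * (k - a) + (m - 1)))
        + (∑ k ∈ range K, w k k) • Mon i j := by
    rw [Fz_expand]
    rw [Finset.sum_congr rfl (fun k _ => Finset.sum_range_succ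
      (fun a => w k a • Mon (2 * a + (l - 2 * k - m)) (2 * (k - a) + (m - 1))) k)]
    rw [Finset.sum_add_distrib, Finset.sum_smul]
    congr 1
    refine Finset.sum_congr rfl fun k hk => ?_
    have h2k := two_k_le l m k hk
    rw [show 2 * k + (l - 2 * k - m) = i from by omega,
        show 2 * (k - k) + (m - 1) = j from by omega]
  have hdpos : 0 < ∑ k ∈ range K, w k k := by
    have : ∀ k, w k k = csq l m * m * gam l k m := by
      intro k; simp [hw]
    rw [Finset.sum_congr rfl fun k _ => this k, ← Finset.mul_sum]
    have hg := gamsum l m hm hml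
    rw [hK, hg]
    have h1 : 0 < (l.choose m : ℝ) := by
      exact_mod_cast Nat.choose_pos hml
    have h2 : 0 < csq l m := csq_pos l m
    positivity
  have hT : (fun q : ℝ × ℝ => Fz l m q.1 q.2) ∈ span ℝ (Fset p) :=
    subset_span ⟨l, m, hm, hml, hlp, rfl⟩
  have hrest : (∑ k ∈ range K, ∑ a ∈ range k,
      w k a • Mon (2 * a + (l - 2 * k - m)) (2 * (k - a) + (m - 1))) ∈ span ℝ (Fset p) := by
    refine Submodule.sum_mem _ fun k hk => Submodule.sum_mem _ fun a ha => ?_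
    refine Submodule.smul_mem _ _ ?_
    have h2k := two_k_le l m k hk
    simp only [Finset.mem_range] at ha
    have hlt : 2 * a + (l - 2 * k - m) < i := by omega
    have hle : (2 * a + (l - 2 * k - m)) + (2 * (k - a) + (m - 1)) ≤ p - 1 := by omega
    exact IH _ hlt _ hle
  have hMon : (∑ k ∈ range K, w k k) • Mon i j
      = (fun q : ℝ × ℝ => Fz l m q.1 q.2)
        - ∑ k ∈ range K, ∑ a ∈ range k,
            w k a • Mon (2 * a + (l - 2 * k - m)) (2 * (k - a) + (m - 1)) := by
    rw [hsplit]; abel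
  have hmem : (∑ k ∈ range K, w k k) • Mon i j ∈ span ℝ (Fset p) := by
    rw [hMon]; exact Submodule.sub_mem _ hT hrest
  have := Submodule.smul_mem _ (∑ k ∈ range K, w k k)⁻¹ hmem
  rwa [inv_smul_smul₀ (ne_of_gt hdpos)] at this

lemma span_F_eq_span_M (p : ℕ) (hp : 1 ≤ p) :
    span ℝ (Fset p) = span ℝ (Mset p) := by
  apply le_antisymm
  · rw [Submodule.span_le]
    rintro f ⟨l, m, hm, hml, hlp, rfl⟩
    exact F_mem_span_M p l m hm hml hlp
  · rw [Submodule.span_le]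
    rintro f ⟨i, j, hij, rfl⟩
    exact M_mem_span_F p hp i j hij

end StepD2


section StepD3
open Finset Submodule

noncomputable def Lmv : MvPolynomial (Fin 2) ℝ →ₗ[ℝ] ((ℝ × ℝ) → ℝ) where
  toFun f := fun q => MvPolynomial.eval ![q.1, q.2] f
  map_add' f g := by funext q; simp
  map_smul' c f := by funext q; simp [MvPolynomial.smul_eval]

lemma Lmv_inj : Function.Injective Lmv := by
  intro f g h
  apply MvPolynomial.funext
  intro v
  have hv : v = ![v 0, v 1] := by
    funext i; fin_cases i <;> simp
  have := congrFun h (v 0, v 1)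
  simpa [Lmv, ← hv] using this

lemma Lmv_ker : LinearMap.ker Lmv = ⊥ := LinearMap.ker_eq_bot.2 Lmv_inj

lemma Lmv_monX (i j : ℕ) :
    Lmv (MvPolynomial.X 0 ^ i * MvPolynomial.X 1 ^ j) = Mon i j := by
  funext q
  simp [Lmv, Mon]

noncomputable def dmap (ij : ℕ × ℕ) : Fin 2 →₀ ℕ :=
  Finsupp.single 0 ij.1 + Finsupp.single 1 ij.2

lemma dmap_inj : Function.Injective dmap := by
  intro a b h
  have h0 := DFunLike.congr_fun h (0 : Fin 2)
  have h1 := DFunLike.congr_fun h (1 : Fin 2)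
  simp [dmap, Finsupp.single_apply] at h0 h1
  exact Prod.ext h0 h1

lemma basis_dmap (ij : ℕ × ℕ) :
    (MvPolynomial.basisMonomials (Fin 2) ℝ) (dmap ij)
      = MvPolynomial.X 0 ^ ij.1 * MvPolynomial.X 1 ^ ij.2 := by
  rw [MvPolynomial.coe_basisMonomials]
  rw [MvPolynomial.X_pow_eq_monomial, MvPolynomial.X_pow_eq_monomial,
    MvPolynomial.monomial_mul, mul_one]
  rfl

lemma mon_indep_all : LinearIndependent ℝ (fun ij : ℕ × ℕ => Mon ij.1 ij.2) := by
  have hb := (MvPolynomial.basisMonomials (Fin 2) ℝ).linearIndependent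
  have h2 := hb.comp dmap dmap_inj
  have h3 := h2.map' Lmv Lmv_ker
  have he : (⇑Lmv ∘ ((MvPolynomial.basisMonomials (Fin 2) ℝ) ∘ dmap))
      = fun ij : ℕ × ℕ => Mon ij.1 ij.2 := by
    funext ij
    simp only [Function.comp]
    rw [basis_dmap]
    exact Lmv_monX ij.1 ij.2
  rwa [he] at h3

end StepD3

/-- for every `1 ≤ m ≤ l ≤ p`, `∇H^{(l,m)}(x,y,0) = (0,0,F^{(l,m)}(x,y))`;
moreover the span of the `F^{(l,m)}` (`1 ≤ m ≤ l ≤ p`) equals the span of the monomials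
`xⁱyʲ` with `i+j ≤ p−1`, and the `F^{(l,m)}` are linearly independent. -/
theorem stmt3 (p : ℕ) (hp : 1 ≤ p) :
    (∀ l m : ℕ, 1 ≤ m → m ≤ l → l ≤ p → ∀ x y : ℝ,
      grad3 (Hfun l m) ![x, y, 0] = ![0, 0, Fz l m x y]) ∧
    (Submodule.span ℝ {f : ℝ × ℝ → ℝ | ∃ l m : ℕ, 1 ≤ m ∧ m ≤ l ∧ l ≤ p ∧
        f = fun q => Fz l m q.1 q.2} =
      Submodule.span ℝ {f : ℝ × ℝ → ℝ | ∃ i j : ℕ, i + j ≤ p - 1 ∧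
        f = fun q => q.1 ^ i * q.2 ^ j}) ∧
    LinearIndependent ℝ (fun lm : {q : ℕ × ℕ // 1 ≤ q.2 ∧ q.2 ≤ q.1 ∧ q.1 ≤ p} =>
      (fun q : ℝ × ℝ => Fz lm.1.1 lm.1.2 q.1 q.2)) := by
  refine ⟨fun l m _ _ _ x y => grad_eq l m x y, span_F_eq_span_M p hp, ?_⟩
  have hfinS : Set.Finite {q : ℕ × ℕ | 1 ≤ q.2 ∧ q.2 ≤ q.1 ∧ q.1 ≤ p} := by
    apply Set.Finite.subset (Set.finite_Iic (p, p))
    rintro ⟨a, b⟩ ⟨h1, h2, h3⟩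
    simp only [Set.mem_Iic, Prod.mk_le_mk]
    omega
  have hfinT : Set.Finite {q : ℕ × ℕ | q.1 + q.2 ≤ p - 1} := by
    apply Set.Finite.subset (Set.finite_Iic (p, p))
    rintro ⟨a, b⟩ h1
    simp only [Set.mem_setOf_eq] at h1
    simp only [Set.mem_Iic, Prod.mk_le_mk]
    omega
  haveI instS : Fintype {q : ℕ × ℕ // 1 ≤ q.2 ∧ q.2 ≤ q.1 ∧ q.1 ≤ p} := hfinS.fintype
  haveI instT : Fintype {q : ℕ × ℕ // q.1 + q.2 ≤ p - 1} := hfinT.fintype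
  set S := {q : ℕ × ℕ // 1 ≤ q.2 ∧ q.2 ≤ q.1 ∧ q.1 ≤ p}
  set T := {q : ℕ × ℕ // q.1 + q.2 ≤ p - 1}
  have eST : S ≃ T :=
    { toFun := fun q => ⟨(q.1.1 - q.1.2, q.1.2 - 1), by
        obtain ⟨⟨l, m⟩, h1, h2, h3⟩ := q; simp only []; omega⟩
      invFun := fun q => ⟨(q.1.1 + q.1.2 + 1, q.1.2 + 1), by
        obtain ⟨⟨i, j⟩, h⟩ := q; simp only [] at h ⊢; omega⟩
      left_inv := fun q => by
        obtain ⟨⟨l, m⟩, h1, h2, h3⟩ := q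
        apply Subtype.ext
        apply Prod.ext <;> simp <;> omega
      right_inv := fun q => by
        obtain ⟨⟨i, j⟩, h⟩ := q
        apply Subtype.ext
        apply Prod.ext <;> simp }
  rw [linearIndependent_iff_card_eq_finrank_span]
  have hrangeF : Set.range (fun lm : S => fun q : ℝ × ℝ => Fz lm.1.1 lm.1.2 q.1 q.2)
      = Fset p := by
    ext f
    constructor
    · rintro ⟨⟨⟨l, m⟩, h1, h2, h3⟩, rfl⟩; exact ⟨l, m, h1, h2, h3, rfl⟩
    · rintro ⟨l, m, h1, h2, h3, rfl⟩; exact ⟨⟨(l, m), h1, h2, h3⟩, rfl⟩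
  have hrangeM : Set.range (fun ij : T => Mon ij.1.1 ij.1.2) = Mset p := by
    ext f
    constructor
    · rintro ⟨⟨⟨i, j⟩, h⟩, rfl⟩; exact ⟨i, j, h, rfl⟩
    · rintro ⟨i, j, h, rfl⟩; exact ⟨⟨(i, j), h⟩, rfl⟩
  have hindepM : LinearIndependent ℝ (fun ij : T => Mon ij.1.1 ij.1.2) :=
    mon_indep_all.comp (Subtype.val : T → ℕ × ℕ) Subtype.val_injective
  have hfr : Module.finrank ℝ (Submodule.span ℝ (Mset p)) = Fintype.card T := by
    rw [← hrangeM]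
    exact finrank_span_eq_card hindepM
  have hcard : Fintype.card S = Fintype.card T := Fintype.card_congr eST
  show Fintype.card S = _
  rw [Set.finrank, hrangeF]
  have : Submodule.span ℝ (Fset p) = Submodule.span ℝ (Mset p) := span_F_eq_span_M p hp
  rw [this, hfr]
  exact hcard
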